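/- Let l ∈ ℚ and define ψ : (0,1) → ℝ by ψ(z) = −2·z^(−1/2)·F(−1/2, 1 + l/2; 1/2; z). Then ψ is differentiable on (0,1) and ψ'(z) = z^(−3/2)·(1−z)^(−(2+l)/2) for all z ∈ (0,1); equivalently, ψ'(z) = 1/x₁(z)² where x₁(z) = z^(3/4)·(1−z)^((2+l)/4). -/

import Mathlib

open Filter Set

noncomputable def dd (b : ℝ) (n : ℕ) : ℝ := (ascPochhammer ℝ n).eval b / n.factorial

lemma dd_zero (b : ℝ) : dd b 0 = 1 := by simp [dd]

lemma dd_succ (b : ℝ) (n : ℕ) : dd b (n+1) = dd b n * (b + n) / (n + 1) := by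
  have h1 : (n.factorial : ℝ) ≠ 0 := Nat.cast_ne_zero.mpr n.factorial_ne_zero
  have h2 : ((n:ℝ) + 1) ≠ 0 := by positivity
  rw [dd, dd, ascPochhammer_succ_eval, Nat.factorial_succ]
  push_cast
  rw [div_mul_eq_mul_div, div_div, mul_comm ((n:ℝ)+1)]

lemma summable_dd_mul (b r : ℝ) (hr0 : 0 ≤ r) (hr1 : r < 1) :
    Summable (fun n : ℕ => (n+1 : ℝ) * |dd b n| * r ^ n) := by
  set ρ : ℝ := (1 + r) / 2 with hρ
  have hrρ : r < ρ := by rw [hρ]; linarith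
  have hρ1 : ρ < 1 := by rw [hρ]; linarith
  have hρ0 : 0 ≤ ρ := by rw [hρ]; linarith
  apply summable_of_ratio_norm_eventually_le hρ1
  obtain ⟨N, hN⟩ := exists_nat_ge (r * (2 + 3 * |b|) / (ρ - r))
  filter_upwards [eventually_ge_atTop (max N 1)] with n hn
  have hn1 : (1:ℝ) ≤ n := by exact_mod_cast le_trans (le_max_right N 1) hn
  have hnN : (N:ℝ) ≤ n := by exact_mod_cast le_trans (le_max_left N 1) hn
  have h1 : |b + n| ≤ |b| + n := by
    calc |b + n| ≤ |b| + |(n:ℝ)| := abs_add_le _ _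
    _ = |b| + n := by rw [Nat.abs_cast]
  have h2 : r * (2 + 3 * |b|) ≤ (ρ - r) * n := by
    rw [div_le_iff₀ (by linarith)] at hN
    calc r * (2 + 3 * |b|) ≤ (ρ - r) * N := by linarith
    _ ≤ (ρ - r) * n := by nlinarith
  have key : ((n:ℝ) + 2) * |b + n| * r ≤ ρ * (((n:ℝ)+1) * ((n:ℝ)+1)) := by
    nlinarith [mul_le_mul_of_nonneg_right h2 (show (0:ℝ) ≤ n by linarith),
      mul_le_mul_of_nonneg_left h1 (mul_nonneg (show (0:ℝ) ≤ (n:ℝ)+2 by linarith) hr0),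
      mul_nonneg hr0 (abs_nonneg b), hρ0]
  have habs : |dd b (n+1)| = |dd b n| * |b + n| / (n + 1) := by
    rw [dd_succ, abs_div, abs_mul, abs_of_nonneg (by positivity : (0:ℝ) ≤ (n:ℝ)+1)]
  have hnorm : ∀ m : ℕ, ‖((m:ℕ)+1 : ℝ) * |dd b m| * r ^ m‖ = ((m:ℝ)+1) * |dd b m| * r ^ m := by
    intro m; push_cast; exact Real.norm_of_nonneg (by positivity)
  rw [hnorm, hnorm]
  push_cast
  rw [habs, pow_succ]
  calc ((n:ℝ)+1+1) * (|dd b n| * |b + n| / ((n:ℝ)+1)) * (r ^ n * r)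
      = (|dd b n| * r ^ n) * (((n:ℝ)+2) * |b + n| * r) / ((n:ℝ)+1) := by ring
    _ ≤ (|dd b n| * r ^ n) * (ρ * (((n:ℝ)+1) * ((n:ℝ)+1))) / ((n:ℝ)+1) := by
        gcongr
    _ = ρ * (((n:ℝ)+1) * |dd b n| * r ^ n) := by
        field_simp

lemma summable_dd (b r : ℝ) (hr0 : 0 ≤ r) (hr1 : r < 1) :
    Summable (fun n : ℕ => |dd b n| * r ^ n) := by
  refine (summable_dd_mul b r hr0 hr1).of_nonneg_of_le
    (fun n => mul_nonneg (abs_nonneg _) (pow_nonneg hr0 n)) (fun n => ?_)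
  have h1 : (0:ℝ) ≤ (n:ℝ) := n.cast_nonneg
  nlinarith [abs_nonneg (dd b n), pow_nonneg hr0 n,
    mul_nonneg (abs_nonneg (dd b n)) (pow_nonneg hr0 n)]

lemma summable_pow (b : ℝ) {z : ℝ} (hz : |z| < 1) :
    Summable (fun n : ℕ => dd b n * z ^ n) := by
  refine Summable.of_norm_bounded (summable_dd b |z| (abs_nonneg z) hz) (fun n => ?_)
  rw [norm_mul, norm_pow, Real.norm_eq_abs, Real.norm_eq_abs]

lemma deriv_bound (b ρ : ℝ) (hρ : 1/2 ≤ ρ) {y : ℝ} (hy : |y| ≤ ρ) (n : ℕ) :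
    ‖dd b n * ((n:ℝ) * y ^ (n-1))‖ ≤ 2 * (((n:ℝ)+1) * |dd b n| * ρ ^ n) := by
  have hρ0 : (0:ℝ) ≤ ρ := by linarith
  rw [Real.norm_eq_abs, abs_mul, abs_mul, abs_pow, Nat.abs_cast]
  cases n with
  | zero => simp
  | succ m =>
    simp only [Nat.add_sub_cancel, Nat.cast_succ]
    have h1 : |y| ^ m ≤ ρ ^ m := pow_le_pow_left₀ (abs_nonneg y) hy m
    have h2 : ρ ^ m ≤ 2 * ρ ^ (m+1) := by
      rw [pow_succ]
      nlinarith [pow_nonneg hρ0 m]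
    have h3 : |y| ^ m ≤ 2 * ρ ^ (m+1) := h1.trans h2
    have h4 : (0:ℝ) ≤ ρ ^ (m+1) := pow_nonneg hρ0 _
    nlinarith [abs_nonneg (dd b (m+1)), abs_nonneg y, pow_nonneg (abs_nonneg y) m,
      mul_le_mul_of_nonneg_left h3 (mul_nonneg (abs_nonneg (dd b (m+1)))
        (show (0:ℝ) ≤ (m:ℝ)+1 by positivity))]

lemma summable_deriv (b : ℝ) {z : ℝ} (hz : |z| < 1) :
    Summable (fun n : ℕ => dd b n * ((n:ℝ) * z ^ (n-1))) := by
  set ρ : ℝ := (|z| + 1) / 2 with hρdef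
  have hρ : 1/2 ≤ ρ := by rw [hρdef]; have := abs_nonneg z; linarith
  have hρ1 : ρ < 1 := by rw [hρdef]; linarith
  refine Summable.of_norm_bounded (((summable_dd_mul b ρ (by linarith) hρ1)).mul_left 2)
    (fun n => deriv_bound b ρ hρ (by rw [hρdef]; linarith) n)

lemma hasDerivAt_G (b : ℝ) {z : ℝ} (hz : |z| < 1) :
    HasDerivAt (fun x : ℝ => ∑' n : ℕ, dd b n * x ^ n)
      (∑' n : ℕ, dd b n * ((n:ℝ) * z ^ (n-1))) z := by
  set ρ : ℝ := (|z| + 1) / 2 with hρdef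
  have hρ : 1/2 ≤ ρ := by rw [hρdef]; have := abs_nonneg z; linarith
  have hρ1 : ρ < 1 := by rw [hρdef]; linarith
  have hzρ : |z| < ρ := by rw [hρdef]; linarith
  refine hasDerivAt_tsum_of_isPreconnected
    (((summable_dd_mul b ρ (by linarith) hρ1)).mul_left 2) isOpen_Ioo
    (convex_Ioo (-ρ) ρ).isPreconnected
    (g := fun n x => dd b n * x ^ n) (g' := fun n y => dd b n * ((n:ℝ) * y ^ (n-1)))
    (fun n y _ => (hasDerivAt_pow n y).const_mul (dd b n))
    (fun n y hy => deriv_bound b ρ hρ (abs_le.mpr ⟨hy.1.le, hy.2.le⟩) n)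
    (y₀ := 0) (by constructor <;> linarith)
    (summable_pow b (by simp : |(0:ℝ)| < 1))
    ⟨(abs_lt.mp hzρ).1, (abs_lt.mp hzρ).2⟩

lemma deriv_rel (b : ℝ) {z : ℝ} (hz : |z| < 1) :
    (1 - z) * (∑' n : ℕ, dd b n * ((n:ℝ) * z ^ (n-1)))
      = b * ∑' n : ℕ, dd b n * z ^ n := by
  set S : ℝ := ∑' n : ℕ, dd b n * ((n:ℝ) * z ^ (n-1)) with hS
  set G : ℝ := ∑' n : ℕ, dd b n * z ^ n with hG
  have hsum1 : Summable (fun n : ℕ => dd b n * ((n:ℝ) * z ^ (n-1))) := summable_deriv b hz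
  have hsum2 : Summable (fun n : ℕ => dd b n * z ^ n) := summable_pow b hz
  have hsum3 : Summable (fun n : ℕ => dd b n * (n:ℝ) * z ^ n) := by
    refine Summable.of_norm_bounded (summable_dd_mul b |z| (abs_nonneg z) hz) (fun n => ?_)
    rw [Real.norm_eq_abs, abs_mul, abs_mul, abs_pow, Nat.abs_cast]
    have : |dd b n| * (n:ℝ) ≤ ((n:ℝ)+1) * |dd b n| := by nlinarith [abs_nonneg (dd b n)]
    exact mul_le_mul_of_nonneg_right this (pow_nonneg (abs_nonneg z) n)
  -- S = b*G + z*S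
  have key : S = b * G + z * S := by
    have h0 : S = ∑' n : ℕ, dd b (n+1) * (((n:ℝ)+1) * z ^ n) := by
      rw [hS, Summable.tsum_eq_zero_add hsum1]
      simp only [Nat.cast_zero, zero_mul, mul_zero, zero_add, Nat.cast_succ, Nat.add_sub_cancel]
    have h1 : ∀ n : ℕ, dd b (n+1) * (((n:ℝ)+1) * z ^ n)
        = b * (dd b n * z ^ n) + z * (dd b n * ((n:ℝ) * z ^ (n-1))) := by
      intro n
      rw [dd_succ]
      have hne : ((n:ℝ)+1) ≠ 0 := by positivity
      cases n with
      | zero => simp [dd_zero]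
      | succ m =>
        simp only [Nat.add_sub_cancel, Nat.cast_succ]
        field_simp
        ring
    have h2 : ∑' n : ℕ, dd b (n+1) * (((n:ℝ)+1) * z ^ n) = b * G + z * S := by
      calc ∑' n : ℕ, dd b (n+1) * (((n:ℝ)+1) * z ^ n)
          = ∑' n : ℕ, (b * (dd b n * z ^ n) + z * (dd b n * ((n:ℝ) * z ^ (n-1)))) := by
            exact tsum_congr h1
        _ = b * G + z * S := by
            rw [Summable.tsum_add (hsum2.mul_left b) (hsum1.mul_left z), tsum_mul_left, tsum_mul_left]
    exact h0.trans h2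
  linarith [key]

lemma hasSum_binomial (b : ℝ) {z : ℝ} (hz : |z| < 1) :
    HasSum (fun n : ℕ => dd b n * z ^ n) ((1 - z) ^ (-b)) := by
  set G : ℝ → ℝ := fun x => ∑' n : ℕ, dd b n * x ^ n with hGdef
  have HD : ∀ x ∈ Ioo (-1:ℝ) 1, HasDerivAt (fun y => (1 - y) ^ b * G y) 0 x := by
    intro x hx
    have hx1 : (0:ℝ) < 1 - x := by linarith [hx.2]
    have hxa : |x| < 1 := abs_lt.mpr ⟨hx.1, hx.2⟩
    have h1 : HasDerivAt (fun y : ℝ => (1 - y) ^ b) (b * (1 - x) ^ (b-1) * (-1)) x := by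
      have hc : HasDerivAt (fun y : ℝ => 1 - y) (-1) x := (hasDerivAt_id x).const_sub 1
      exact (Real.hasDerivAt_rpow_const (Or.inl hx1.ne')).comp x hc
    have h2 := hasDerivAt_G b hxa
    have h3 := h1.mul h2
    have hval : b * (1 - x) ^ (b-1) * (-1) * G x
        + (1 - x) ^ b * (∑' n : ℕ, dd b n * ((n:ℝ) * x ^ (n-1))) = 0 := by
      have hpow : (1 - x) ^ b = (1 - x) ^ (b-1) * (1 - x) := by
        rw [← Real.rpow_add_one hx1.ne' (b-1)]; ring_nf
      rw [hpow]
      have hrel := deriv_rel b hxa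
      simp only [hGdef]
      linear_combination ((1-x) ^ (b-1)) * hrel
    rw [hval] at h3
    exact h3
  have hconst : ∀ z' ∈ Ioo (-1:ℝ) 1, (1 - z') ^ b * G z' = 1 := by
    intro z' hz'
    have h0 : (0:ℝ) ∈ Ioo (-1:ℝ) 1 := by constructor <;> norm_num
    have := Convex.is_const_of_fderivWithin_eq_zero (𝕜 := ℝ) (convex_Ioo (-1:ℝ) 1)
      (fun x hx => ((HD x hx).differentiableAt).differentiableWithinAt)
      (fun x hx => by
        rw [fderivWithin_of_isOpen isOpen_Ioo hx, (HD x hx).hasFDerivAt.fderiv]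
        ext y
        simp) hz' h0
    rw [this]
    have hG0 : G 0 = 1 := by
      rw [hGdef]
      simp only []
      rw [tsum_eq_single 0 (fun n hn => by simp [zero_pow hn])]
      simp [dd_zero]
    rw [hG0, sub_zero, Real.one_rpow, one_mul]
  have hzmem : z ∈ Ioo (-1:ℝ) 1 := ⟨(abs_lt.mp hz).1, (abs_lt.mp hz).2⟩
  have h1z : (0:ℝ) < 1 - z := by linarith [hzmem.2]
  have hGz : G z = (1 - z) ^ (-b) := by
    rw [Real.rpow_neg h1z.le]
    exact eq_inv_of_mul_eq_one_left (by rw [mul_comm]; exact hconst z hzmem)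
  have := (summable_pow b hz).hasSum
  rw [show (∑' n : ℕ, dd b n * z ^ n) = (1 - z) ^ (-b) from hGz] at this
  exact this

lemma poch_half_pos (n : ℕ) : 0 < (ascPochhammer ℝ n).eval (1/2 : ℝ) := by
  induction n with
  | zero => simp
  | succ m ih =>
    rw [ascPochhammer_succ_eval]
    have : (0:ℝ) ≤ m := m.cast_nonneg
    nlinarith

lemma poch_half_neg (n : ℕ) :
    (ascPochhammer ℝ n).eval (-(1/2) : ℝ) * (2*(n:ℝ) - 1)
      = -(ascPochhammer ℝ n).eval (1/2 : ℝ) := by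
  induction n with
  | zero => simp
  | succ m ih =>
    rw [ascPochhammer_succ_eval, ascPochhammer_succ_eval]
    push_cast
    linear_combination ((2*(m:ℝ)+1)/2) * ih

lemma half_ne (n : ℕ) : ((n:ℝ) - 1/2) ≠ 0 := by
  rcases n with _ | m
  · norm_num
  · have : (0:ℝ) ≤ m := m.cast_nonneg
    push_cast
    intro h; linarith

lemma abs_half (n : ℕ) : (1:ℝ)/2 ≤ |(n:ℝ) - 1/2| := by
  rcases n with _ | m
  · rw [Nat.cast_zero, zero_sub, abs_neg, abs_of_nonneg] <;> norm_num
  · have : (0:ℝ) ≤ m := m.cast_nonneg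
    rw [abs_of_nonneg (by push_cast; linarith)]
    push_cast; linarith

lemma psi_hasDeriv (b : ℝ) {z : ℝ} (hz0 : 0 < z) (hz1 : z < 1) :
    HasDerivAt (fun x : ℝ => ∑' n : ℕ, dd b n / ((n:ℝ) - 1/2) * x ^ ((n:ℝ) - 1/2))
      (z ^ (-(3:ℝ)/2) * (1 - z) ^ (-b)) z := by
  set a : ℝ := z / 2 with hadef
  set c : ℝ := (z + 1) / 2 with hcdef
  have ha0 : 0 < a := by rw [hadef]; linarith
  have hc0 : 0 < c := by rw [hcdef]; linarith
  have hc1 : c < 1 := by rw [hcdef]; linarith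
  have hmem : z ∈ Ioo a c := by constructor <;> (first | rw [hadef] | rw [hcdef]) <;> linarith
  have key := hasDerivAt_tsum_of_isPreconnected
    (u := fun n : ℕ => a ^ (-(3:ℝ)/2) * (|dd b n| * c ^ n))
    (g := fun (n : ℕ) (x : ℝ) => dd b n / ((n:ℝ) - 1/2) * x ^ ((n:ℝ) - 1/2))
    (g' := fun (n : ℕ) (y : ℝ) => dd b n * y ^ ((n:ℝ) - 3/2))
    ((summable_dd b c hc0.le hc1).mul_left _) isOpen_Ioo (convex_Ioo a c).isPreconnected
    (fun n y hy => by
      have hy0 : 0 < y := lt_trans ha0 hy.1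
      have h := (Real.hasDerivAt_rpow_const (x := y) (p := (n:ℝ)-1/2)
        (Or.inl hy0.ne')).const_mul (dd b n / ((n:ℝ) - 1/2))
      refine h.congr_deriv ?_
      rw [show (n:ℝ) - 1/2 - 1 = (n:ℝ) - 3/2 by ring]
      rw [← mul_assoc, div_mul_cancel₀ _ (half_ne n)])
    (fun n y hy => by
      have hy0 : 0 < y := lt_trans ha0 hy.1
      rw [Real.norm_eq_abs, abs_mul, abs_of_nonneg (Real.rpow_nonneg hy0.le _)]
      have hsplit : y ^ ((n:ℝ) - 3/2) = y ^ n * y ^ (-(3:ℝ)/2) := by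
        rw [← Real.rpow_natCast y n, ← Real.rpow_add hy0]
        congr 1; ring
      rw [hsplit]
      have e1 : y ^ n ≤ c ^ n := pow_le_pow_left₀ hy0.le hy.2.le n
      have e2 : y ^ (-(3:ℝ)/2) ≤ a ^ (-(3:ℝ)/2) :=
        Real.rpow_le_rpow_of_nonpos ha0 hy.1.le (by norm_num)
      calc |dd b n| * (y ^ n * y ^ (-(3:ℝ)/2))
          ≤ |dd b n| * (c ^ n * a ^ (-(3:ℝ)/2)) := by
            refine mul_le_mul_of_nonneg_left ?_ (abs_nonneg _)
            exact mul_le_mul e1 e2 (Real.rpow_nonneg hy0.le _) (pow_nonneg hc0.le n)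
        _ = a ^ (-(3:ℝ)/2) * (|dd b n| * c ^ n) := by ring)
    hmem
    (by
      refine Summable.of_norm_bounded
        (((summable_dd b z hz0.le hz1).mul_left (2 * z ^ (-(1:ℝ)/2)))) (fun n => ?_)
      rw [Real.norm_eq_abs, abs_mul, abs_div, abs_of_nonneg (Real.rpow_nonneg hz0.le _)]
      have hsplit : z ^ ((n:ℝ) - 1/2) = z ^ n * z ^ (-(1:ℝ)/2) := by
        rw [← Real.rpow_natCast z n, ← Real.rpow_add hz0]
        congr 1; ring
      rw [hsplit]
      have h1 : |dd b n| / |(n:ℝ) - 1/2| ≤ 2 * |dd b n| := by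
        rw [div_le_iff₀ (lt_of_lt_of_le (by norm_num) (abs_half n))]
        nlinarith [abs_half n, abs_nonneg (dd b n)]
      calc |dd b n| / |(n:ℝ) - 1/2| * (z ^ n * z ^ (-(1:ℝ)/2))
          ≤ 2 * |dd b n| * (z ^ n * z ^ (-(1:ℝ)/2)) := by
            refine mul_le_mul_of_nonneg_right h1 ?_
            exact mul_nonneg (pow_nonneg hz0.le n) (Real.rpow_nonneg hz0.le _)
        _ = 2 * z ^ (-(1:ℝ)/2) * (|dd b n| * z ^ n) := by ring)
    hmem
  have hval : (∑' n : ℕ, dd b n * z ^ ((n:ℝ) - 3/2))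
      = z ^ (-(3:ℝ)/2) * (1 - z) ^ (-b) := by
    have h1 : ∀ n : ℕ, dd b n * z ^ ((n:ℝ) - 3/2)
        = z ^ (-(3:ℝ)/2) * (dd b n * z ^ n) := by
      intro n
      rw [show ((n:ℝ) - 3/2) = -(3:ℝ)/2 + n by ring, Real.rpow_add hz0, Real.rpow_natCast]
      ring
    rw [tsum_congr h1, tsum_mul_left,
      (hasSum_binomial b (by rw [abs_of_pos hz0]; exact hz1)).tsum_eq]
  rwa [hval] at key

/-- The Gauss hypergeometric series
`F(a,b;c;z) = Σ_{n} ((a)_n (b)_n)/((c)_n · n!) · z^n`, where `(x)_n` is the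
ascending Pochhammer symbol. -/
noncomputable def hypergeom (a b c z : ℝ) : ℝ :=
  ∑' n : ℕ, ((ascPochhammer ℝ n).eval a * (ascPochhammer ℝ n).eval b)
    / ((ascPochhammer ℝ n).eval c * (n.factorial : ℝ)) * z ^ n

/-- Equation (eq:psi) of the paper: the quadrature
`ψ(z) = −(2/√z)·F(−1/2, 1+l/2; 1/2; z)` of the reduced variational equation
satisfies `ψ'(z) = z^{−3/2}(1−z)^{−(2+l)/2}`, i.e. `ψ'(z) = 1/x₁(z)²` with
`x₁(z) = z^{3/4}(1−z)^{(2+l)/4}`. -/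
theorem psi_derivative (l : ℚ) :
    (∀ z ∈ Set.Ioo (0 : ℝ) 1,
      HasDerivAt (fun z : ℝ =>
          -2 * z ^ (-(1 : ℝ)/2) * hypergeom (-(1/2)) (1 + (l : ℝ)/2) (1/2) z)
        (z ^ (-(3 : ℝ)/2) * (1 - z) ^ (-(2 + (l : ℝ))/2)) z) ∧
    (∀ z ∈ Set.Ioo (0 : ℝ) 1,
      z ^ (-(3 : ℝ)/2) * (1 - z) ^ (-(2 + (l : ℝ))/2)
        = 1 / (z ^ ((3 : ℝ)/4) * (1 - z) ^ ((2 + (l : ℝ))/4)) ^ 2) := by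
  set b : ℝ := 1 + (l:ℝ)/2 with hb
  constructor
  · rintro z ⟨hz0, hz1⟩
    have coef : ∀ n : ℕ,
        -2 * ((ascPochhammer ℝ n).eval (-(1/2) : ℝ) * (ascPochhammer ℝ n).eval b
          / ((ascPochhammer ℝ n).eval (1/2 : ℝ) * (n.factorial : ℝ)))
          = dd b n / ((n:ℝ) - 1/2) := by
      intro n
      have hq := poch_half_neg n
      have hqp := (poch_half_pos n).ne'
      have hfac : (n.factorial : ℝ) ≠ 0 := Nat.cast_ne_zero.mpr n.factorial_ne_zero
      have h2n : (2*(n:ℝ) - 1) ≠ 0 := by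
        have := half_ne n
        intro h; apply this; linarith
      have hA : (ascPochhammer ℝ n).eval (-(1/2) : ℝ)
          = -(ascPochhammer ℝ n).eval (1/2 : ℝ) / (2*(n:ℝ) - 1) := by
        field_simp
        linarith [hq]
      have h3 : ((n:ℝ) * n.factorial * 2 - n.factorial) ≠ 0 := by
        rw [show ((n:ℝ) * n.factorial * 2 - n.factorial) = (n.factorial:ℝ) * (2*(n:ℝ)-1) by ring]
        exact mul_ne_zero hfac h2n
      rw [hA, dd]
      field_simp
    have H := psi_hasDeriv b hz0 hz1
    have hexp : -(2 + (l:ℝ))/2 = -b := by rw [hb]; ring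
    rw [hexp]
    apply H.congr_of_eventuallyEq
    filter_upwards [Ioo_mem_nhds hz0 hz1] with x hx
    obtain ⟨hx0, hx1⟩ := hx
    rw [hypergeom, ← tsum_mul_left]
    refine tsum_congr (fun n => ?_)
    have hsplit : x ^ ((n:ℝ) - 1/2) = x ^ n * x ^ (-(1:ℝ)/2) := by
      rw [← Real.rpow_natCast x n, ← Real.rpow_add hx0]
      congr 1; ring
    rw [hsplit]
    linear_combination (x ^ n * x ^ (-(1:ℝ)/2)) * (coef n)
  · rintro z ⟨hz0, hz1⟩
    have h1z : (0:ℝ) < 1 - z := by linarith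
    have e1 : (z ^ ((3:ℝ)/4)) ^ 2 = z ^ ((3:ℝ)/2) := by
      rw [sq, ← Real.rpow_add hz0]; norm_num
    have e2 : ((1 - z) ^ ((2 + (l:ℝ))/4)) ^ 2 = (1 - z) ^ ((2 + (l:ℝ))/2) := by
      rw [sq, ← Real.rpow_add h1z]; congr 1; ring
    rw [mul_pow, e1, e2, show -(3:ℝ)/2 = -((3:ℝ)/2) by norm_num,
      show -(2 + (l:ℝ))/2 = -((2 + (l:ℝ))/2) by ring,
      Real.rpow_neg hz0.le, Real.rpow_neg h1z.le, one_div, mul_inv]
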